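/- arXiv:1101.4315 — 5 statements merged into one kernel-verified Lean document; each statement's English description precedes it below -/
import Mathlib

section
/- Given densities ρ_l, ρ_r > 0, velocities u_l, u_r, and total enthalpies H_l, H_r, with Roe averages u* = (√ρ_l u_l + √ρ_r u_r)/(√ρ_l + √ρ_r) and H* = (√ρ_l H_l + √ρ_r H_r)/(√ρ_l + √ρ_r), one has −u*H*(ρ_r − ρ_l) + H*(ρ_r u_r − ρ_l u_l) + u*(ρ_r H_r − ρ_l H_l) = ρ_r u_r H_r − ρ_l u_l H_l. -/
/-! With `a = √ρl` and `b = √ρr` we have `ρl = a²`, `ρr = b²`, and the identity becomes a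
rational identity in `a`, `b`, valid over any field as soon as `a + b ≠ 0`. -/

theorem roe_average_identity {K : Type*} [Field K] {a b ustar Hstar : K} (ul ur Hl Hr : K)
    (hab : a + b ≠ 0) (hu : ustar = (a * ul + b * ur) / (a + b))
    (hH : Hstar = (a * Hl + b * Hr) / (a + b)) :
    -ustar * Hstar * (b ^ 2 - a ^ 2) + Hstar * (b ^ 2 * ur - a ^ 2 * ul)
      + ustar * (b ^ 2 * Hr - a ^ 2 * Hl)
    = b ^ 2 * ur * Hr - a ^ 2 * ul * Hl := by
  subst hu hH
  field_simp
  ring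

/-- The Roe averages of velocity and total enthalpy satisfy identity (3.3.9). -/
theorem roe_enthalpy_identity (ρl ρr ul ur Hl Hr : ℝ) (hl : 0 < ρl) (hr : 0 < ρr)
    (ustar Hstar : ℝ)
    (hu : ustar = (Real.sqrt ρl * ul + Real.sqrt ρr * ur)
        / (Real.sqrt ρl + Real.sqrt ρr))
    (hH : Hstar = (Real.sqrt ρl * Hl + Real.sqrt ρr * Hr)
        / (Real.sqrt ρl + Real.sqrt ρr)) :
    -ustar * Hstar * (ρr - ρl) + Hstar * (ρr * ur - ρl * ul)
      + ustar * (ρr * Hr - ρl * Hl)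
    = ρr * ur * Hr - ρl * ul * Hl := by
  have hsum : Real.sqrt ρl + Real.sqrt ρr ≠ 0 :=
    (add_pos (Real.sqrt_pos.mpr hl) (Real.sqrt_pos.mpr hr)).ne'
  simpa only [Real.sq_sqrt hl.le, Real.sq_sqrt hr.le] using
    roe_average_identity ul ur Hl Hr hsum hu hH
end

section
/- Let W_l, W_r be polytropic gas states and W* the Roe intermediate state with u* and H* the square-root-weighted averages of velocity and total enthalpy. Then the matrix A(W_l, W_r) = dF(W*) satisfies the Roe property F(W_r) − F(W_l) = A(W_l, W_r)·(W_r − W_l), where F is the 1D Euler flux of a polytropic gas. -/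
/-!
With `a = √ρl`, `b = √ρr` and `f̄ = (a fl + b fr) / (a + b)`, Roe averages obey the discrete
product rule `Δ(ρ f g) = f̄ Δ(ρ g) + ḡ Δ(ρ f) - f̄ ḡ Δρ`. For a polytropic gas
`ρ H = γ ρE - (γ - 1)/2 ρ u²`, so every flux jump is a combination of the jumps of the
conserved variables and of `ρ u²`, `ρ u H`; the product rule with `f = g = u` and with
`f = u`, `g = H` rewrites the latter two exactly as the rows of `dF(W*)` prescribe.
-/

theorem mulVec_fin_three {α : Type*} [NonUnitalNonAssocSemiring α]
    (a b c d e f g h i x y z : α) :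
    (!![a, b, c; d, e, f; g, h, i]).mulVec ![x, y, z]
      = ![a * x + b * y + c * z, d * x + e * y + f * z, g * x + h * y + i * z] := by
  ext j
  fin_cases j <;> simp [Matrix.mulVec, add_assoc]

theorem sq_mul_mul_sub_eq_roe {K : Type*} [Field K] (a b fl fr gl gr : K) (h : a + b ≠ 0) :
    b ^ 2 * fr * gr - a ^ 2 * fl * gl =
      (a * fl + b * fr) / (a + b) * (b ^ 2 * gr - a ^ 2 * gl)
        + (a * gl + b * gr) / (a + b) * (b ^ 2 * fr - a ^ 2 * fl)
        - (a * fl + b * fr) / (a + b) * ((a * gl + b * gr) / (a + b)) * (b ^ 2 - a ^ 2) := by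
  field_simp
  ring

theorem polytropic_mul_enthalpy {K : Type*} [Field K] {γ ρ u E p H : K} (hρ : ρ ≠ 0)
    (hp : p = (γ - 1) * ρ * (E - u ^ 2 / 2)) (hH : H = E + p / ρ) :
    ρ * H = γ * (ρ * E) - (γ - 1) / 2 * (ρ * u ^ 2) := by
  rw [hH, hp]
  field_simp
  ring

theorem roe_matrix_property_general (γ : ℝ)
    (ρl ρr ul ur El Er : ℝ) (hl : 0 < ρl) (hr : 0 < ρr)
    (pl pr Hl Hr ustar Hstar : ℝ)
    (hpl : pl = (γ - 1) * ρl * (El - ul ^ 2 / 2))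
    (hpr : pr = (γ - 1) * ρr * (Er - ur ^ 2 / 2))
    (hHl : Hl = El + pl / ρl) (hHr : Hr = Er + pr / ρr)
    (hu : ustar = (Real.sqrt ρl * ul + Real.sqrt ρr * ur)
        / (Real.sqrt ρl + Real.sqrt ρr))
    (hH : Hstar = (Real.sqrt ρl * Hl + Real.sqrt ρr * Hr)
        / (Real.sqrt ρl + Real.sqrt ρr))
    (A : Matrix (Fin 3) (Fin 3) ℝ)
    (hA : A = !![0, 1, 0;
                 (γ - 3) / 2 * ustar ^ 2, (3 - γ) * ustar, γ - 1;
                 (γ - 1) / 2 * ustar ^ 3 - ustar * Hstar,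
                   Hstar - (γ - 1) * ustar ^ 2, γ * ustar]) :
    (![ρr * ur, ρr * ur ^ 2 + pr, ρr * ur * Hr]
        - ![ρl * ul, ρl * ul ^ 2 + pl, ρl * ul * Hl])
      = A.mulVec (![ρr, ρr * ur, ρr * Er] - ![ρl, ρl * ul, ρl * El]) := by
  have hsum : Real.sqrt ρl + Real.sqrt ρr ≠ 0 := by positivity
  have momentum := sq_mul_mul_sub_eq_roe _ _ ul ur ul ur hsum
  have energy := sq_mul_mul_sub_eq_roe _ _ ul ur Hl Hr hsum
  rw [← hu, ← hH, Real.sq_sqrt hl.le, Real.sq_sqrt hr.le] at energy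
  rw [← hu, Real.sq_sqrt hl.le, Real.sq_sqrt hr.le] at momentum
  have enthalpyl := polytropic_mul_enthalpy hl.ne' hpl hHl
  have enthalpyr := polytropic_mul_enthalpy hr.ne' hpr hHr
  simp only [hA, Matrix.cons_sub_cons, Matrix.empty_sub_empty, mulVec_fin_three]
  refine Matrix.vec3_eq (by ring) ?_ ?_
  · linear_combination (3 - γ) / 2 * momentum + hpr - hpl
  · linear_combination energy + ustar * (enthalpyr - enthalpyl) - (γ - 1) / 2 * ustar * momentum

/-- The matrix A(W_l,W_r) = dF(W*) built on the Roe averages u*, H* satisfies the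
Roe property F(W_r) − F(W_l) = A(W_l,W_r)·(W_r − W_l) for the 1D Euler flux. -/
theorem roe_matrix_property (γ : ℝ) (hγ : 1 < γ)
    (ρl ρr ul ur El Er : ℝ) (hl : 0 < ρl) (hr : 0 < ρr)
    (pl pr Hl Hr ustar Hstar : ℝ)
    (hpl : pl = (γ - 1) * ρl * (El - ul ^ 2 / 2))
    (hpr : pr = (γ - 1) * ρr * (Er - ur ^ 2 / 2))
    (hHl : Hl = El + pl / ρl) (hHr : Hr = Er + pr / ρr)
    (hu : ustar = (Real.sqrt ρl * ul + Real.sqrt ρr * ur)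
        / (Real.sqrt ρl + Real.sqrt ρr))
    (hH : Hstar = (Real.sqrt ρl * Hl + Real.sqrt ρr * Hr)
        / (Real.sqrt ρl + Real.sqrt ρr))
    (A : Matrix (Fin 3) (Fin 3) ℝ)
    (hA : A = !![0, 1, 0;
                 (γ - 3) / 2 * ustar ^ 2, (3 - γ) * ustar, γ - 1;
                 (γ - 1) / 2 * ustar ^ 3 - ustar * Hstar,
                   Hstar - (γ - 1) * ustar ^ 2, γ * ustar]) :
    (![ρr * ur, ρr * ur ^ 2 + pr, ρr * ur * Hr]
        - ![ρl * ul, ρl * ul ^ 2 + pl, ρl * ul * Hl])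
      = A.mulVec (![ρr, ρr * ur, ρr * Er] - ![ρl, ρl * ul, ρl * El]) :=
  roe_matrix_property_general γ ρl ρr ul ur El Er hl hr pl pr Hl Hr ustar Hstar hpl hpr hHl hHr hu
    hH A hA
end

section
/- For Roe averages of two polytropic gas states with positive pressures and densities, the quantity H* − (u*)²/2 is strictly positive; precisely, H* − (u*)²/2 = [½ ρ* (u_r − u_l)² + (ρ_l + ρ*) c_l²/(γ−1) + (ρ* + ρ_r) c_r²/(γ−1)] / (√ρ_l + √ρ_r)², where ρ* = √(ρ_l ρ_r). In particular the Roe-average sound speed c* = √((γ−1)(H* − (u*)²/2)) is well defined and real. -/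
/- With a = √ρ_l, b = √ρ_r and e_i = c_i²/(γ−1), H* − (u*)²/2 equals
(a b (u_r − u_l)²/2 + a (a + b) e_l + b (a + b) e_r) / (a + b)², a rational identity in a, b;
it is positive because ρ* = a b ≥ 0 and e_l, e_r > 0. -/

theorem roe_average_sub_half_sq_eq {K : Type*} [Field K] (a b ul ur el er : K)
    (hab : a + b ≠ 0) :
    (a * (ul ^ 2 / 2 + el) + b * (ur ^ 2 / 2 + er)) / (a + b)
        - ((a * ul + b * ur) / (a + b)) ^ 2 / 2
      = (a * b * (ur - ul) ^ 2 / 2 + (a ^ 2 + a * b) * el + (a * b + b ^ 2) * er)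
        / (a + b) ^ 2 := by
  field_simp
  ring

/-- For the Roe averages of two polytropic gas states, H* − (u*)²/2 is strictly
positive, with the explicit formula (3.4.9); hence the Roe sound speed
c* = √((γ−1)(H* − (u*)²/2)) is well defined. -/
theorem roe_sound_speed_positive (γ : ℝ) (hγ : 1 < γ)
    (ρl ρr ul ur cl cr : ℝ) (hρl : 0 < ρl) (hρr : 0 < ρr)
    (hcl : 0 < cl) (hcr : 0 < cr)
    (Hl Hr ρstar ustar Hstar : ℝ)
    (hHl : Hl = ul ^ 2 / 2 + cl ^ 2 / (γ - 1))
    (hHr : Hr = ur ^ 2 / 2 + cr ^ 2 / (γ - 1))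
    (hρ : ρstar = Real.sqrt (ρl * ρr))
    (hu : ustar = (Real.sqrt ρl * ul + Real.sqrt ρr * ur)
        / (Real.sqrt ρl + Real.sqrt ρr))
    (hH : Hstar = (Real.sqrt ρl * Hl + Real.sqrt ρr * Hr)
        / (Real.sqrt ρl + Real.sqrt ρr)) :
    Hstar - ustar ^ 2 / 2
      = (ρstar * (ur - ul) ^ 2 / 2 + (ρl + ρstar) * cl ^ 2 / (γ - 1)
          + (ρstar + ρr) * cr ^ 2 / (γ - 1))
        / (Real.sqrt ρl + Real.sqrt ρr) ^ 2
    ∧ 0 < Hstar - ustar ^ 2 / 2 := by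
  have hγ₁ : 0 < γ - 1 := sub_pos.2 hγ
  have hformula : Hstar - ustar ^ 2 / 2
      = (ρstar * (ur - ul) ^ 2 / 2 + (ρl + ρstar) * cl ^ 2 / (γ - 1)
          + (ρstar + ρr) * cr ^ 2 / (γ - 1))
        / (Real.sqrt ρl + Real.sqrt ρr) ^ 2 := by
    rw [hH, hu, hHl, hHr, roe_average_sub_half_sq_eq _ _ _ _ _ _ (by positivity),
      Real.sq_sqrt hρl.le, Real.sq_sqrt hρr.le, hρ, Real.sqrt_mul hρl.le]
    ring
  refine ⟨hformula, hformula ▸ ?_⟩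
  rw [hρ]
  positivity
end

section
/- The amplification factor of the explicit linear MUSCL scheme for the advection equation, W_{j+1/2}^{n+1} = W_{j+1/2}^n − σ[(W_{j+1/2}^n + ¼(W_{j+3/2}^n − W_{j−1/2}^n)) − (W_{j−1/2}^n + ¼(W_{j+1/2}^n − W_{j−3/2}^n))] with σ = aΔt/Δx, applied to the Fourier mode W_{j+1/2}^n = e^{ik(j+1/2)Δx}, equals g(ξ, σ) = 1 − (σ/2)(1 − cos ξ)² − i(σ/2) sin ξ (3 − cos ξ), where ξ = kΔx. Moreover |g(ξ, σ)|² = 1 + σ²ξ² + O(ξ⁴) as ξ → 0, so for every σ ≠ 0 there exists ξ with |g(ξ, σ)| > 1 (the scheme is unconditionally unstable). -/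
/-!
Writing `t = 1 - cos ξ` and using `sin² ξ = t (2 - t)`, the modulus of the amplification factor
collapses to `|g|² = 1 - σ t² + σ² t (2 + t - t² / 2)`. Since `0 ≤ t ≤ 2`, the `σ²`-term is at least
`2 σ² t`, while `σ t²` is quadratic in `t`: for `0 < t < 2 |σ|` the scheme amplifies. Near `ξ = 0`,
`2 t = ξ² + O(ξ⁴)` gives the expansion `|g|² = 1 + σ² ξ² + O(ξ⁴)`.
-/

open Asymptotics

/-- The factor `g(ξ, σ)`, with `ξ = k Δx` and `σ = a Δt / Δx`. -/
noncomputable def musclAmplification (ξ σ : ℝ) : ℂ :=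
  1 - (σ : ℂ) / 2 * ((1 : ℂ) - (Real.cos ξ : ℂ)) ^ 2
    - Complex.I * ((σ : ℂ) / 2) * (Real.sin ξ : ℂ) * ((3 : ℂ) - (Real.cos ξ : ℂ))

/-- One explicit Euler step of the linear MUSCL scheme at the cell `j`; `W j` stands for
`W_{j+1/2}` and `W j + (W (j + 1) - W (j - 1)) / 4` is the upwind value at the right interface. -/
noncomputable def musclStep (σ : ℝ) (W : ℤ → ℂ) (j : ℤ) : ℂ :=
  W j - (σ : ℂ) * ((W j + (W (j + 1) - W (j - 1)) / 4) - (W (j - 1) + (W j - W (j - 2)) / 4))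

lemma fourierMode_add {k Δx : ℝ} {W : ℤ → ℂ}
    (hW : ∀ j : ℤ, W j = Complex.exp (Complex.I * ((k * (((j : ℝ) + 1 / 2)) * Δx : ℝ) : ℂ)))
    (j m : ℤ) : W (j + m) = Complex.exp (Complex.I * ((k * Δx : ℝ) : ℂ)) ^ m * W j := by
  rw [hW, hW j, ← Complex.exp_int_mul, ← Complex.exp_add]
  congr 1
  push_cast
  ring

theorem musclStep_fourierMode {k Δx σ : ℝ} {W : ℤ → ℂ}
    (hW : ∀ j : ℤ, W j = Complex.exp (Complex.I * ((k * (((j : ℝ) + 1 / 2)) * Δx : ℝ) : ℂ)))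
    (j : ℤ) : musclStep σ W j = musclAmplification (k * Δx) σ * W j := by
  set ξ := k * Δx
  set z := Complex.exp (Complex.I * (ξ : ℂ)) with hz_def
  have hz : z = Real.cos ξ + Real.sin ξ * Complex.I := by
    rw [hz_def, mul_comm, Complex.exp_mul_I, Complex.ofReal_cos, Complex.ofReal_sin]
  have hz_inv : z⁻¹ = Real.cos ξ - Real.sin ξ * Complex.I := by
    rw [← Complex.exp_neg, show -(Complex.I * ξ) = ((-ξ : ℝ) : ℂ) * Complex.I by push_cast; ring,
      Complex.exp_mul_I, ← Complex.ofReal_cos, ← Complex.ofReal_sin, Real.cos_neg, Real.sin_neg]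
    push_cast
    ring
  have h_succ : W (j + 1) = z * W j := by simpa only [zpow_one] using fourierMode_add hW j 1
  have h_pred : W (j - 1) = z⁻¹ * W j := by
    simpa only [← sub_eq_add_neg, zpow_neg, zpow_one] using fourierMode_add hW j (-1)
  have h_pred₂ : W (j - 2) = z⁻¹ ^ 2 * W j := by
    simpa only [← sub_eq_add_neg, zpow_neg, inv_pow, zpow_ofNat] using fourierMode_add hW j (-2)
  have h_pyth : (Real.sin ξ : ℂ) ^ 2 + (Real.cos ξ : ℂ) ^ 2 = 1 := by
    exact_mod_cast Real.sin_sq_add_cos_sq ξ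
  rw [musclStep, musclAmplification, h_succ, h_pred, h_pred₂, hz_inv, hz]
  linear_combination (-(σ : ℂ) * W j * Real.sin ξ ^ 2 / 4) * Complex.I_sq
    + ((σ : ℂ) * W j / 4) * h_pyth

theorem sq_norm_musclAmplification (ξ σ : ℝ) :
    ‖musclAmplification ξ σ‖ ^ 2
      = 1 - σ * (1 - Real.cos ξ) ^ 2
        + σ ^ 2 * (1 - Real.cos ξ) * (2 + (1 - Real.cos ξ) - (1 - Real.cos ξ) ^ 2 / 2) := by
  have h_re_im : musclAmplification ξ σ
      = ((1 - σ / 2 * (1 - Real.cos ξ) ^ 2 : ℝ) : ℂ)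
        + ((-(σ / 2 * Real.sin ξ * (3 - Real.cos ξ)) : ℝ) : ℂ) * Complex.I := by
    rw [musclAmplification]
    push_cast
    ring
  rw [h_re_im, Complex.sq_norm, Complex.normSq_add_mul_I]
  linear_combination (σ ^ 2 / 4 * (3 - Real.cos ξ) ^ 2) * Real.sin_sq_add_cos_sq ξ

lemma one_sub_cos_isBigO_sq : (fun ξ : ℝ => 1 - Real.cos ξ) =O[nhds 0] (fun ξ => ξ ^ 2) := by
  refine .of_bound (1 / 2) (.of_forall fun ξ => ?_)
  rw [Real.norm_of_nonneg (sub_nonneg.2 (Real.cos_le_one ξ)), Real.norm_of_nonneg (sq_nonneg ξ)]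
  linarith [Real.one_sub_sq_div_two_le_cos (x := ξ)]

lemma cos_sub_taylor_isBigO :
    (fun ξ : ℝ => Real.cos ξ - (1 - ξ ^ 2 / 2)) =O[nhds 0] (fun ξ => ξ ^ 4) := by
  refine .of_bound (5 / 96) ?_
  filter_upwards [Metric.closedBall_mem_nhds (0 : ℝ) one_pos] with ξ hξ
  rw [Real.norm_eq_abs, Real.norm_eq_abs, abs_pow, mul_comm]
  exact Real.cos_bound (by simpa using hξ)

theorem sq_norm_musclAmplification_isBigO (σ : ℝ) :
    (fun ξ : ℝ => ‖musclAmplification ξ σ‖ ^ 2 - (1 + σ ^ 2 * ξ ^ 2))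
      =O[nhds 0] (fun ξ => ξ ^ 4) := by
  have h_sq : (fun ξ : ℝ => (1 - Real.cos ξ) ^ 2) =O[nhds 0] (fun ξ => ξ ^ 4) := by
    simpa only [← pow_mul] using one_sub_cos_isBigO_sq.pow 2
  have h_bdd : (fun ξ : ℝ => 1 - Real.cos ξ) =O[nhds 0] (fun _ => (1 : ℝ)) :=
    (continuous_const.sub Real.continuous_cos).continuousAt.isBigO_one ℝ
  have h_cube : (fun ξ : ℝ => (1 - Real.cos ξ) * (1 - Real.cos ξ) ^ 2)
      =O[nhds 0] (fun ξ => ξ ^ 4) := by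
    simpa only [one_mul] using h_bdd.mul h_sq
  have h_sum := ((cos_sub_taylor_isBigO.const_mul_left (-2 * σ ^ 2)).add
    (h_sq.const_mul_left (σ ^ 2 - σ))).sub (h_cube.const_mul_left (σ ^ 2 / 2))
  refine h_sum.congr_left fun ξ => ?_
  rw [sq_norm_musclAmplification]
  ring

theorem one_lt_norm_musclAmplification {ξ σ : ℝ} (ht_pos : 0 < 1 - Real.cos ξ)
    (ht_lt : 1 - Real.cos ξ < 2 * |σ|) : 1 < ‖musclAmplification ξ σ‖ := by
  rw [← one_lt_sq_iff₀ (norm_nonneg _), sq_norm_musclAmplification]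
  set t := 1 - Real.cos ξ
  have ht_le : t ≤ 2 := by linarith [Real.neg_one_le_cos ξ]
  have h_gain : 0 < |σ| * t * (2 * |σ| - t) := by
    have : 0 < |σ| := by linarith
    positivity
  have h_lin : σ * t ^ 2 ≤ |σ| * t ^ 2 := by gcongr; exact le_abs_self σ
  have h_cubic : 0 ≤ σ ^ 2 * t ^ 2 * (1 - t / 2) := by
    have : 0 ≤ 1 - t / 2 := by linarith
    positivity
  nlinarith [sq_abs σ]

theorem exists_one_lt_norm_musclAmplification {σ : ℝ} (hσ : σ ≠ 0) :
    ∃ ξ, 1 < ‖musclAmplification ξ σ‖ := by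
  set t := min |σ| 1
  have ht_pos : 0 < t := lt_min (abs_pos.2 hσ) one_pos
  have ht_le : t ≤ 1 := min_le_right _ _
  have hcos : Real.cos (Real.arccos (1 - t)) = 1 - t := Real.cos_arccos (by linarith) (by linarith)
  refine ⟨Real.arccos (1 - t), one_lt_norm_musclAmplification ?_ ?_⟩ <;> rw [hcos]
  · linarith
  · linarith [min_le_left |σ| 1]

/-- The amplification factor of the explicit linear MUSCL scheme for advection is
g(ξ,σ) = 1 − (σ/2)(1−cos ξ)² − i(σ/2) sin ξ (3 − cos ξ); its modulus satisfies
|g|² = 1 + σ²ξ² + O(ξ⁴), so the scheme is unstable for every σ ≠ 0. -/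
theorem muscl_scheme_unstable (g : ℝ → ℝ → ℂ)
    (hg : ∀ ξ σ : ℝ, g ξ σ
        = 1 - (σ : ℂ) / 2 * ((1 : ℂ) - (Real.cos ξ : ℂ)) ^ 2
          - Complex.I * ((σ : ℂ) / 2) * (Real.sin ξ : ℂ) * ((3 : ℂ) - (Real.cos ξ : ℂ))) :
    (∀ (k Δx σ : ℝ) (Wmode : ℤ → ℂ),
      (∀ j : ℤ, Wmode j = Complex.exp (Complex.I * ((k * (((j : ℝ) + 1 / 2)) * Δx : ℝ) : ℂ))) →
      ∀ j : ℤ,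
        Wmode j - (σ : ℂ) * ((Wmode j + (Wmode (j + 1) - Wmode (j - 1)) / 4)
            - (Wmode (j - 1) + (Wmode j - Wmode (j - 2)) / 4))
          = g (k * Δx) σ * Wmode j)
    ∧ (∀ σ : ℝ,
        (fun ξ : ℝ => ‖g ξ σ‖ ^ 2 - (1 + σ ^ 2 * ξ ^ 2))
          =O[nhds (0 : ℝ)] (fun ξ : ℝ => ξ ^ 4))
    ∧ (∀ σ : ℝ, σ ≠ 0 → ∃ ξ : ℝ, 1 < ‖g ξ σ‖) := by
  obtain rfl : g = musclAmplification := funext₂ hg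
  exact ⟨fun _ _ σ _ hW j => musclStep_fourierMode (σ := σ) hW j,
    sq_norm_musclAmplification_isBigO, fun _ hσ => exists_one_lt_norm_musclAmplification hσ⟩
end

section
/- Let j be a sonic index, i.e., λ_j(W^{j−1}) < 0 < λ_j(W^j), and let p_j be the cubic Hermite polynomial satisfying p_j(0) = 0, p_j'(0) = λ_j(W^{j−1}), p_j(α_j) = λ_j* α_j, p_j'(α_j) = λ_j(W^j) (with α_j ≠ 0). Then p_j has a unique interior local minimum on the interval between 0 and α_j, attained at the point ξ_j* = −λ_j(W^{j−1}) α_j / [(3λ_j* − 2λ_j(W^{j−1}) − λ_j(W^j)) + √((3λ_j* − λ_j(W^j) − λ_j(W^{j−1}))² − λ_j(W^{j−1})λ_j(W^j))]. -/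
/-!
Write `p x = a x³ + b x² + c x` with `a = (λ₁ + λ₀ - 2λ*)/α²`, `b = (3λ* - 2λ₀ - λ₁)/α`,
`c = λ₀`. Around a critical point `t`, `p x = p t + (x - t)² ((3 a t + b) + a (x - t))`, so `t`
is a local minimum when `3 a t + b > 0` and is not one when `3 a t + b < 0`. The two critical
points have opposite values `±√(b² - 3ac)` of `3 a t + b`, and `ξ*` is the rationalised form of
the one with `+`. For a sonic index `λ₀ λ₁ < 0` makes the discriminant
`((3λ* - λ₁ - λ₀)² - λ₀λ₁)/α²` positive and puts `ξ*` strictly between `0` and `α`.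
-/

open Filter Topology

section QuadraticGrowth

variable {f g : ℝ → ℝ} {t : ℝ}

lemma eventually_lt_of_eq_add_sq_mul (hf : ∀ x, f x = f t + (x - t) ^ 2 * g x)
    (hg : ContinuousAt g t) (hgt : 0 < g t) : ∀ᶠ x in 𝓝[≠] t, f t < f x := by
  filter_upwards [nhdsWithin_le_nhds (hg.eventually (lt_mem_nhds hgt)), self_mem_nhdsWithin]
    with x hgx hxt
  rw [hf x]
  exact lt_add_of_pos_right _ (mul_pos (sq_pos_of_ne_zero (sub_ne_zero.2 hxt)) hgx)

lemma isLocalMin_of_eq_add_sq_mul (hf : ∀ x, f x = f t + (x - t) ^ 2 * g x)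
    (hg : ContinuousAt g t) (hgt : 0 < g t) : IsLocalMin f t := by
  filter_upwards [eventually_nhdsWithin_iff.1 (eventually_lt_of_eq_add_sq_mul hf hg hgt)]
    with x hx
  rcases eq_or_ne x t with rfl | hxt
  · exact le_rfl
  · exact (hx hxt).le

lemma not_isLocalMin_of_eq_add_sq_mul (hf : ∀ x, f x = f t + (x - t) ^ 2 * g x)
    (hg : ContinuousAt g t) (hgt : g t < 0) : ¬ IsLocalMin f t := by
  intro hmin
  have hlt : ∀ᶠ x in 𝓝[≠] t, -f t < -f x :=
    eventually_lt_of_eq_add_sq_mul (f := -f) (g := -g)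
      (fun x => by simp only [Pi.neg_apply, hf x]; ring) hg.neg (neg_pos.2 hgt)
  obtain ⟨x, hle, hx⟩ := ((hmin.filter_mono nhdsWithin_le_nhds).and hlt).exists
  linarith

end QuadraticGrowth

section Cubic

variable {a b c t : ℝ}

lemma cubic_eq_add_sq_mul (ht : 3 * a * t ^ 2 + 2 * b * t + c = 0) (x : ℝ) :
    a * x ^ 3 + b * x ^ 2 + c * x
      = (a * t ^ 3 + b * t ^ 2 + c * t) + (x - t) ^ 2 * ((3 * a * t + b) + a * (x - t)) := by
  linear_combination (x - t) * ht

lemma continuousAt_cubic_remainder :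
    ContinuousAt (fun x : ℝ => (3 * a * t + b) + a * (x - t)) t := by
  fun_prop

lemma isLocalMin_cubic_of_critical (ht : 3 * a * t ^ 2 + 2 * b * t + c = 0)
    (hpos : 0 < 3 * a * t + b) : IsLocalMin (fun x => a * x ^ 3 + b * x ^ 2 + c * x) t :=
  isLocalMin_of_eq_add_sq_mul (cubic_eq_add_sq_mul ht) continuousAt_cubic_remainder (by simpa)

lemma IsLocalMin.cubic_critical (h : IsLocalMin (fun x => a * x ^ 3 + b * x ^ 2 + c * x) t) :
    3 * a * t ^ 2 + 2 * b * t + c = 0 :=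
  h.hasDerivAt_eq_zero <|
    ((((hasDerivAt_pow 3 t).const_mul a).fun_add ((hasDerivAt_pow 2 t).const_mul b)).fun_add
      ((hasDerivAt_id' t).const_mul c)).congr_deriv (by norm_num; ring)

lemma IsLocalMin.cubic_curvature_nonneg
    (h : IsLocalMin (fun x => a * x ^ 3 + b * x ^ 2 + c * x) t) : 0 ≤ 3 * a * t + b := by
  by_contra! hneg
  exact not_isLocalMin_of_eq_add_sq_mul (cubic_eq_add_sq_mul h.cubic_critical)
    continuousAt_cubic_remainder (by simpa) h

theorem isLocalMin_cubic_iff {s : ℝ} (hs : 0 < s) (hs2 : s ^ 2 = b ^ 2 - 3 * a * c)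
    (hbs : b + s ≠ 0) :
    IsLocalMin (fun x => a * x ^ 3 + b * x ^ 2 + c * x) t ↔ t = -c / (b + s) := by
  have hcrit : 3 * a * (-c / (b + s)) ^ 2 + 2 * b * (-c / (b + s)) + c = 0 := by
    field_simp
    linear_combination c * hs2
  have hcurv : 3 * a * (-c / (b + s)) + b = s := by
    field_simp
    linear_combination -hs2
  constructor
  · intro h
    by_contra hne
    have hsum : (3 * a * t + b) + (3 * a * (-c / (b + s)) + b) = 0 := by
      refine (mul_eq_zero.1 ?_).resolve_left (sub_ne_zero.2 hne)
      linear_combination h.cubic_critical - hcrit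
    linarith [h.cubic_curvature_nonneg]
  · rintro rfl
    exact isLocalMin_cubic_of_critical hcrit (hcurv.symm ▸ hs)

end Cubic

lemma pos_add_sqrt_sq_add {x y : ℝ} (hy : 0 < y) : 0 < x + √(x ^ 2 + y) := by
  have : |x| < √(x ^ 2 + y) := Real.lt_sqrt_of_sq_lt (by rw [sq_abs]; linarith)
  linarith [neg_abs_le x]

theorem sonic_cubic_unique_interior_min_general
    (lam0 lam1 lamstar α : ℝ)
    (h0 : lam0 < 0) (h1 : 0 < lam1)
    (hα : 0 < α)
    (p : ℝ → ℝ)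
    (hp : ∀ ξ : ℝ, p ξ = (lam1 + lam0 - 2 * lamstar) / α ^ 2 * ξ ^ 3
        + (3 * lamstar - 2 * lam0 - lam1) / α * ξ ^ 2 + lam0 * ξ)
    (ξstar : ℝ)
    (hξ : ξstar = -lam0 * α / ((3 * lamstar - 2 * lam0 - lam1)
        + Real.sqrt ((3 * lamstar - lam1 - lam0) ^ 2 - lam0 * lam1))) :
    ξstar ∈ Set.Ioo 0 α ∧ IsLocalMin p ξstar
    ∧ ∀ ξ ∈ Set.Ioo 0 α, IsLocalMin p ξ → ξ = ξstar := by
  set A := lam1 + lam0 - 2 * lamstar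
  set B := 3 * lamstar - 2 * lam0 - lam1
  set s := √((3 * lamstar - lam1 - lam0) ^ 2 - lam0 * lam1)
  have hlam : 0 < -(lam0 * lam1) := neg_pos.2 (mul_neg_of_neg_of_pos h0 h1)
  have hdisc : 0 < (3 * lamstar - lam1 - lam0) ^ 2 - lam0 * lam1 := by
    linarith [sq_nonneg (3 * lamstar - lam1 - lam0)]
  have hs : 0 < s := Real.sqrt_pos.2 hdisc
  have hs2 : s ^ 2 = B ^ 2 - 3 * A * lam0 := by
    rw [Real.sq_sqrt hdisc.le]
    ring
  have hBs : -lam0 < B + s := by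
    have := pos_add_sqrt_sq_add (x := 3 * lamstar - lam1 - lam0) hlam
    rw [← sub_eq_add_neg] at this
    linarith
  have hξ' : ξstar = -lam0 / (B / α + s / α) := by
    rw [hξ]
    field_simp
  have hmin (t : ℝ) := isLocalMin_cubic_iff (t := t) (a := A / α ^ 2) (b := B / α) (c := lam0)
    (s := s / α)    (div_pos hs hα) (by field_simp; linear_combination hs2)
    (by rw [← add_div]; exact div_ne_zero (by linarith) hα.ne')
  rw [show p = fun x => A / α ^ 2 * x ^ 3 + B / α * x ^ 2 + lam0 * x from funext hp]
  refine ⟨⟨?_, ?_⟩, (hmin ξstar).2 hξ', fun ξ _ h => (hmin ξ).1 h |>.trans hξ'.symm⟩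
  · rw [hξ]
    exact div_pos (mul_pos (neg_pos.2 h0) hα) (by linarith)
  · rw [hξ, div_lt_iff₀ (by linarith)]
    nlinarith

/-- For a sonic index, the cubic Hermite polynomial of the entropy correction has a
unique interior local minimum on (0, α), attained at the explicit point ξ*. -/
theorem sonic_cubic_unique_interior_min
    (lam0 lam1 lamstar α : ℝ)
    (h0 : lam0 < 0) (h1 : 0 < lam1)
    (hs0 : lam0 < lamstar) (hs1 : lamstar < lam1)
    (hα : 0 < α)
    (p : ℝ → ℝ)
    (hp : ∀ ξ : ℝ, p ξ = (lam1 + lam0 - 2 * lamstar) / α ^ 2 * ξ ^ 3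
        + (3 * lamstar - 2 * lam0 - lam1) / α * ξ ^ 2 + lam0 * ξ)
    (ξstar : ℝ)
    (hξ : ξstar = -lam0 * α / ((3 * lamstar - 2 * lam0 - lam1)
        + Real.sqrt ((3 * lamstar - lam1 - lam0) ^ 2 - lam0 * lam1))) :
    ξstar ∈ Set.Ioo 0 α ∧ IsLocalMin p ξstar
    ∧ ∀ ξ ∈ Set.Ioo 0 α, IsLocalMin p ξ → ξ = ξstar :=
  sonic_cubic_unique_interior_min_general lam0 lam1 lamstar α h0 h1 hα p hp ξstar hξ
end
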